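/- Let W ⊆ S^{n+1} be a spherical convex body of the form W = ⋂_{i=1}^k H(Pᵢ) for finitely many points P₁,…,P_k (polytope type). Then W = W° if and only if each Pᵢ is a point of W and W = s-conv{P₁,…,P_k}. -/

import Mathlib

open scoped RealInnerProductSpace BigOperators
open Real

namespace Sph

/-- Ambient Euclidean space `ℝ^{n+2}` containing the sphere `S^{n+1}`. -/
abbrev E (n : ℕ) := EuclideanSpace ℝ (Fin (n + 2))

/-- The unit sphere `S^{n+1} ⊂ ℝ^{n+2}`. -/
def sph (n : ℕ) : Set (E n) := {x | ‖x‖ = 1}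

/-- The closed hemisphere `H(P)` centered at `P`. -/
def hemi {n : ℕ} (P : E n) : Set (E n) := {Q | ‖Q‖ = 1 ∧ 0 ≤ ⟪P, Q⟫}

/-- The boundary `∂H(P)` of the hemisphere centered at `P`. -/
def hemiBdry {n : ℕ} (P : E n) : Set (E n) := {Q | ‖Q‖ = 1 ∧ ⟪P, Q⟫ = 0}

/-- Geodesic (angular) distance on the unit sphere. -/
noncomputable def gdist {n : ℕ} (P Q : E n) : ℝ := Real.arccos ⟪P, Q⟫

/-- Radial normalization of a vector. -/
noncomputable def nmz {n : ℕ} (x : E n) : E n := ‖x‖⁻¹ • x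

/-- The geodesic arc joining `P` and `Q`. -/
noncomputable def arc {n : ℕ} (P Q : E n) : Set (E n) :=
  {X | ∃ t ∈ Set.Icc (0 : ℝ) 1, X = nmz ((1 - t) • P + t • Q)}

/-- A subset of the sphere is hemispherical if it misses some closed hemisphere. -/
def Hemispherical {n : ℕ} (W : Set (E n)) : Prop := ∃ P ∈ sph n, W ∩ hemi P = ∅

/-- Spherical convexity: a subset of the sphere closed under geodesic arcs. -/
noncomputable def SphConvex {n : ℕ} (W : Set (E n)) : Prop :=
  W ⊆ sph n ∧ ∀ P ∈ W, ∀ Q ∈ W, arc P Q ⊆ W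

/-- Interior of `W` relative to the sphere. -/
def sphInterior {n : ℕ} (W : Set (E n)) : Set (E n) :=
  {X | X ∈ W ∧ ∃ U : Set (E n), IsOpen U ∧ X ∈ U ∧ U ∩ sph n ⊆ W}

/-- Frontier of `W` relative to the sphere. -/
def sphFrontier {n : ℕ} (W : Set (E n)) : Set (E n) :=
  closure W ∩ closure (sph n \ W)

/-- A spherical convex body: closed, hemispherical, spherically convex,
with an interior point. -/
noncomputable def SphConvexBody {n : ℕ} (W : Set (E n)) : Prop :=
  IsClosed W ∧ Hemispherical W ∧ SphConvex W ∧ (sphInterior W).Nonempty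

/-- The hemisphere `H(P)` supports `W`. -/
noncomputable def Supports {n : ℕ} (W : Set (E n)) (P : E n) : Prop :=
  P ∈ sph n ∧ W ⊆ hemi P ∧ (sphFrontier W ∩ hemiBdry P).Nonempty

/-- The width of `W` determined by the supporting hemisphere `H(P)`:
the minimum thickness `π - |PQ|` of lunes `H(P) ∩ H(Q)` over supporting
hemispheres `H(Q)` (so that `W ⊆ H(P) ∩ H(Q)`). -/
noncomputable def widthAt {n : ℕ} (W : Set (E n)) (P : E n) : ℝ :=
  sInf {d | ∃ Q, Supports W Q ∧ d = π - gdist P Q}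

/-- `W` is of constant width `ρ`. -/
noncomputable def ConstWidth {n : ℕ} (W : Set (E n)) (ρ : ℝ) : Prop :=
  ∀ P, Supports W P → widthAt W P = ρ

/-- The spherical polar set `W° = ⋂_{P ∈ W} H(P)` (as a subset of the sphere). -/
def polar {n : ℕ} (W : Set (E n)) : Set (E n) :=
  {Q | ‖Q‖ = 1 ∧ ∀ P ∈ W, 0 ≤ ⟪P, Q⟫}

/-- The diameter of `W`: the supremum of geodesic distances between its points. -/
noncomputable def diam {n : ℕ} (W : Set (E n)) : ℝ :=
  sSup {d | ∃ P ∈ W, ∃ Q ∈ W, d = gdist P Q}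

/-- The spherical convex hull: normalized nonnegative convex combinations. -/
noncomputable def sconv {n : ℕ} (W : Set (E n)) : Set (E n) :=
  {X | ∃ (k : ℕ) (t : Fin k → ℝ) (f : Fin k → E n), (∀ i, f i ∈ W) ∧
    (∀ i, 0 ≤ t i) ∧ (∑ i, t i) = 1 ∧ X = nmz (∑ i, t i • f i)}

/-- Embedding `x ↦ (x, 1)` of `ℝ^{n+1}` into `ℝ^{n+2}`. -/
noncomputable def lift {n : ℕ} (x : EuclideanSpace ℝ (Fin (n + 1))) : E n :=
  (WithLp.equiv 2 (Fin (n + 2) → ℝ)).symm (Fin.snoc (fun i => x i) 1)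

/-- The north pole `N = (0, …, 0, 1)`. -/
noncomputable def north (n : ℕ) : E n := EuclideanSpace.single (Fin.last (n + 1)) 1

end Sph

open Sph

/-
If `W = ⋂ H(Pᵢ)`, a nonnegative combination of the `Pᵢ` has nonnegative inner product with every
point of `W`; this gives `W ⊆ W°` when `W = s-conv{Pᵢ}`, and `W° ⊆ W` holds as soon as every
`Pᵢ ∈ W`. Conversely, if `W = W°` then each `Pᵢ ∈ W° = W`, and since `W` lies in an open
hemisphere the origin is not in the convex hull of the `Pᵢ`, so `s-conv{Pᵢ} ⊆ W`. The remaining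
inclusion `W° ⊆ s-conv{Pᵢ}` is Farkas' lemma: a point `x` outside the cone over the `Pᵢ` is
separated from it by some `y` with `⟪Pᵢ, y⟫ ≥ 0` for all `i`, i.e. `y / ‖y‖ ∈ W`, and
`⟪y, x⟫ < 0`, so `x ∉ W°`.
-/

open Set Topology

section Farkas

variable {H : Type*} [NormedAddCommGroup H] [InnerProductSpace ℝ H]

theorem inner_mem_of_mem_convexHull {s : Set H} {T : Set ℝ} (hT : Convex ℝ T) (x : H)
    (hs : ∀ p ∈ s, ⟪x, p⟫ ∈ T) {v : H} (hv : v ∈ convexHull ℝ s) : ⟪x, v⟫ ∈ T :=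
  convexHull_min hs (hT.linear_preimage (innerₛₗ ℝ x)) hv

theorem zero_notMem_convexHull_of_inner_neg {s : Set H} {C : H} (hC : ∀ p ∈ s, ⟪C, p⟫ < 0) :
    (0 : H) ∉ convexHull ℝ s := fun h0 => by
  simpa using inner_mem_of_mem_convexHull (convex_Iio 0) C hC h0

theorem exists_inner_pos_of_disjoint_ray [CompleteSpace H] {s : Set H} (hs : s.Finite) {x : H}
    (hdisj : Disjoint (convexHull ℝ s) ((fun r : ℝ => r • x) '' Ici 0)) :
    ∃ y, (∀ p ∈ s, 0 < ⟪p, y⟫) ∧ ⟪y, x⟫ ≤ 0 := by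
  obtain ⟨f, u, v, hfs, huv, hfray⟩ := geometric_hahn_banach_compact_closed
    (convex_convexHull ℝ s) (hs.isCompact_convexHull ℝ)
    ((convex_Ici (0 : ℝ)).linear_image (LinearMap.toSpanSingleton ℝ H x))
    (isClosedMap_smul_left (𝕜 := ℝ) x _ isClosed_Ici) hdisj
  have hv : v < 0 := by simpa using hfray 0 ⟨0, self_mem_Ici, zero_smul ℝ x⟩
  have hfx : 0 ≤ f x := by
    by_contra! hfx
    have := hfray ((v / f x) • x) ⟨v / f x, div_nonneg_of_nonpos hv.le hfx.le, rfl⟩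
    rw [map_smul, smul_eq_mul, div_mul_cancel₀ _ hfx.ne] at this
    exact this.false
  refine ⟨-(InnerProductSpace.toDual ℝ H).symm f, fun p hp => ?_, ?_⟩
  · rw [inner_neg_right, real_inner_comm, InnerProductSpace.toDual_symm_apply]
    linarith [hfs p (subset_convexHull ℝ s hp)]
  · rw [inner_neg_left, InnerProductSpace.toDual_symm_apply]
    linarith

theorem exists_inner_neg_of_inner_pos {s : Set H} (hs : s.Finite) {x y : H} (hx : x ≠ 0)
    (hys : ∀ p ∈ s, 0 < ⟪p, y⟫) (hyx : ⟪y, x⟫ ≤ 0) :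
    ∃ y', (∀ p ∈ s, 0 ≤ ⟪p, y'⟫) ∧ ⟪y', x⟫ < 0 := by
  have hnear : ∀ᶠ ε in 𝓝 (0 : ℝ), ∀ p ∈ s, 0 < ⟪p, y - ε • x⟫ := by
    refine hs.eventually_all.mpr fun p hp => ?_
    have hcont : Continuous fun ε : ℝ => ⟪p, y - ε • x⟫ := by fun_prop
    exact hcont.tendsto' 0 _ (by simp) |>.eventually_const_lt (hys p hp)
  obtain ⟨ε, hε, hεs⟩ := hnear.exists_gt
  refine ⟨y - ε • x, fun p hp => (hεs p hp).le, ?_⟩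
  rw [inner_sub_left, real_inner_smul_left, real_inner_self_eq_norm_sq]
  nlinarith [mul_pos hε (pow_pos (norm_pos_iff.mpr hx) 2)]

/-- Farkas' lemma for the cone over a finite set whose convex hull avoids the origin. -/
theorem exists_pos_smul_mem_convexHull [CompleteSpace H] {s : Set H} (hs : s.Finite)
    (h0 : (0 : H) ∉ convexHull ℝ s) {x : H} (hx : x ≠ 0)
    (hdual : ∀ y, (∀ p ∈ s, 0 ≤ ⟪p, y⟫) → 0 ≤ ⟪y, x⟫) :
    ∃ r : ℝ, 0 < r ∧ r • x ∈ convexHull ℝ s := by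
  by_contra! hray
  have hdisj : Disjoint (convexHull ℝ s) ((fun r : ℝ => r • x) '' Ici 0) := by
    rw [disjoint_right]
    rintro _ ⟨r, hr, rfl⟩
    rcases (mem_Ici.mp hr).eq_or_lt with rfl | hr
    · simpa using h0
    · exact hray r hr
  obtain ⟨y, hys, hyx⟩ := exists_inner_pos_of_disjoint_ray hs hdisj
  obtain ⟨y', hy's, hy'x⟩ := exists_inner_neg_of_inner_pos hs hx hys hyx
  exact (hdual y' hy's).not_gt hy'x

end Farkas

namespace Sph

variable {n : ℕ}

theorem norm_nmz {x : E n} (hx : x ≠ 0) : ‖nmz x‖ = 1 := by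
  rw [nmz, norm_smul, norm_inv, norm_norm, inv_mul_cancel₀ (norm_ne_zero_iff.mpr hx)]

theorem inner_nmz_left (v x : E n) : ⟪nmz v, x⟫ = ‖v‖⁻¹ * ⟪v, x⟫ :=
  real_inner_smul_left _ _ _

theorem inner_nmz_right (x v : E n) : ⟪x, nmz v⟫ = ‖v‖⁻¹ * ⟪x, v⟫ :=
  real_inner_smul_right _ _ _

theorem nmz_pos_smul_of_norm_eq_one {r : ℝ} (hr : 0 < r) {x : E n} (hx : ‖x‖ = 1) :
    nmz (r • x) = x := by
  rw [nmz, norm_smul, hx, mul_one, Real.norm_of_nonneg hr.le, smul_smul,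
    inv_mul_cancel₀ hr.ne', one_smul]

theorem sconv_eq_image_convexHull (s : Set (E n)) : sconv s = nmz '' convexHull ℝ s := by
  ext z
  constructor
  · rintro ⟨m, t, f, hfs, ht0, ht1, rfl⟩
    exact ⟨_, mem_convexHull_of_exists_fintype t f ht0 ht1 hfs rfl, rfl⟩
  · rintro ⟨v, hv, rfl⟩
    obtain ⟨ι, _, t, f, ht0, ht1, hfs, rfl⟩ := mem_convexHull_iff_exists_fintype.mp hv
    let e := Fintype.equivFin ι
    refine ⟨Fintype.card ι, t ∘ e.symm, f ∘ e.symm, fun i => hfs _, fun i => ht0 _, ?_, ?_⟩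
    · rw [← ht1]; exact e.symm.sum_comp t
    · congr 1; exact (e.symm.sum_comp fun i => t i • f i).symm

theorem inner_nonneg_of_mem_sconv {s : Set (E n)} {x : E n} (hs : ∀ p ∈ s, 0 ≤ ⟪p, x⟫)
    {z : E n} (hz : z ∈ sconv s) : 0 ≤ ⟪z, x⟫ := by
  rw [sconv_eq_image_convexHull] at hz
  obtain ⟨v, hv, rfl⟩ := hz
  have hvx : 0 ≤ ⟪x, v⟫ := inner_mem_of_mem_convexHull (convex_Ici 0) x
    (fun p hp => (real_inner_comm x p).symm ▸ hs p hp) hv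
  rw [inner_nmz_left, real_inner_comm]
  positivity

theorem mem_iInter_hemi_iff {ι : Sort*} {P : ι → E n} {x : E n} (hx : ‖x‖ = 1) :
    x ∈ ⋂ i, hemi (P i) ↔ ∀ i, 0 ≤ ⟪P i, x⟫ := by
  simp [hemi, hx]

theorem Hemispherical.exists_inner_neg {W : Set (E n)} (h : Hemispherical W) (hW : W ⊆ sph n) :
    ∃ C : E n, ∀ w ∈ W, ⟪C, w⟫ < 0 := by
  obtain ⟨C, -, hC⟩ := h
  refine ⟨C, fun w hw => not_le.mp fun hCw => ?_⟩
  exact (eq_empty_iff_forall_notMem.mp hC) w ⟨hw, hW hw, hCw⟩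

theorem sconv_subset_iInter_hemi {ι : Sort*} {P : ι → E n} {s : Set (E n)}
    (h0 : (0 : E n) ∉ convexHull ℝ s) (hs : s ⊆ ⋂ i, hemi (P i)) :
    sconv s ⊆ ⋂ i, hemi (P i) := by
  intro z hz
  obtain ⟨v, hv, rfl⟩ := (sconv_eq_image_convexHull s).le hz
  have hv0 : v ≠ 0 := by rintro rfl; exact h0 hv
  refine (mem_iInter_hemi_iff (norm_nmz hv0)).mpr fun i => ?_
  rw [real_inner_comm]
  exact inner_nonneg_of_mem_sconv
    (fun p hp => real_inner_comm p (P i) ▸ (mem_iInter.mp (hs hp) i).2) hz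

theorem polar_iInter_hemi_subset_sconv {ι : Type*} [Finite ι] {P : ι → E n}
    (h0 : (0 : E n) ∉ convexHull ℝ (range P)) : polar (⋂ i, hemi (P i)) ⊆ sconv (range P) := by
  rintro x ⟨hx1, hx⟩
  have hx0 : x ≠ 0 := by rintro rfl; simp at hx1
  have hdual : ∀ y, (∀ p ∈ range P, 0 ≤ ⟪p, y⟫) → 0 ≤ ⟪y, x⟫ := by
    intro y hy
    rcases eq_or_ne y 0 with rfl | hy0
    · simp
    have hyW : nmz y ∈ ⋂ i, hemi (P i) := by
      refine (mem_iInter_hemi_iff (norm_nmz hy0)).mpr fun i => ?_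
      rw [inner_nmz_right]
      exact mul_nonneg (by positivity) (hy _ (mem_range_self i))
    have := hx _ hyW
    rw [inner_nmz_left] at this
    exact nonneg_of_mul_nonneg_right this (by positivity)
  obtain ⟨r, hr, hrx⟩ := exists_pos_smul_mem_convexHull (finite_range P) h0 hx0 hdual
  rw [sconv_eq_image_convexHull]
  exact ⟨r • x, hrx, nmz_pos_smul_of_norm_eq_one hr hx1⟩

end Sph

theorem polytope_self_polar_iff {n : ℕ} (k : ℕ) (P : Fin k → E n)
    (hP : ∀ i, P i ∈ sph n) (W : Set (E n)) (hWdef : W = ⋂ i, hemi (P i))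
    (hW : SphConvexBody W) :
    W = polar W ↔ ((∀ i, P i ∈ W) ∧ W = sconv (Set.range P)) := by
  obtain ⟨-, hWhemi, ⟨hWsph, -⟩, -⟩ := hW
  subst hWdef
  have hinner : ∀ x ∈ ⋂ i, hemi (P i), ∀ i, 0 ≤ ⟪P i, x⟫ := fun x hx i => (mem_iInter.mp hx i).2
  constructor
  · intro hpol
    have hPW : ∀ i, P i ∈ ⋂ i, hemi (P i) := fun i =>
      hpol ▸ ⟨hP i, fun x hx => real_inner_comm x (P i) ▸ hinner x hx i⟩
    obtain ⟨C, hC⟩ := hWhemi.exists_inner_neg hWsph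
    have h0 : (0 : E n) ∉ convexHull ℝ (range P) :=
      zero_notMem_convexHull_of_inner_neg (forall_mem_range.mpr fun i => hC _ (hPW i))
    exact ⟨hPW, subset_antisymm (hpol.le.trans (polar_iInter_hemi_subset_sconv h0))
      (sconv_subset_iInter_hemi h0 (range_subset_iff.mpr hPW))⟩
  · rintro ⟨hPW, hconv⟩
    refine subset_antisymm (fun x hx => ⟨hWsph hx, fun z hz => ?_⟩)
      (fun q hq => (mem_iInter_hemi_iff hq.1).mpr fun i => hq.2 _ (hPW i))
    rw [hconv] at hz
    exact inner_nonneg_of_mem_sconv (forall_mem_range.mpr (hinner x hx)) hz
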